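/- Let τ : {a,b}* → {a,b,x}* be the letter-by-letter rewriting function that replaces each occurrence of the letter a that is preceded (in the whole word) by an even number of occurrences of b with the letter x, and leaves every other letter unchanged (so e.g. τ(aba) = xba and τ(baa) = baa). Then τ is not Ab-continuous: there exists a language L ⊆ {a,b,x}* recognized by a finite abelian group such that the preimage τ⁻¹(L) is not recognized by any finite abelian group. -/
import Mathlib


/-- The two-letter alphabet `{a, b}`. -/
inductive AB : Type
  | a : AB
  | b : AB
deriving DecidableEq

/-- The three-letter alphabet `{a, b, x}`. -/
inductive ABX : Type
  | a : ABX
  | b : ABX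
  | x : ABX
deriving DecidableEq

/-- `tauAux even w` rewrites `w` letter by letter, where `even` records whether
an even number of `b`'s has been read so far: an `a` preceded by an even number
of `b`'s becomes `x`, every other letter is unchanged. -/
def tauAux : Bool → List AB → List ABX
  | _, [] => []
  | even, AB.a :: rest => (if even then ABX.x else ABX.a) :: tauAux even rest
  | even, AB.b :: rest => ABX.b :: tauAux (!even) rest

/-- The rewriting function `τ` replacing each `a` preceded (in the whole word)
by an even number of `b`'s with `x`; e.g. `τ(aba) = xba` and `τ(baa) = baa`. -/
def tauRw : List AB → List ABX := tauAux true

/-- `L` is recognized by a finite abelian group. -/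
def RecogByFinAbGroup {A : Type} (L : Set (List A)) : Prop :=
  ∃ (G : Type) (_ : Fintype G) (_ : CommGroup G)
    (φ : FreeMonoid A →* G) (S : Set G),
    L = {w : List A | φ (FreeMonoid.ofList w) ∈ S}

def cntHom : FreeMonoid ABX →* Multiplicative (ZMod 2) :=
  FreeMonoid.lift (fun c => Multiplicative.ofAdd (if c = ABX.x then (1 : ZMod 2) else 0))

lemma cntHom_apply (w : List ABX) :
    cntHom (FreeMonoid.ofList w) = Multiplicative.ofAdd ((w.count ABX.x : ZMod 2)) := by
  induction w with
  | nil => simp [cntHom]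
  | cons c rest ih =>
    rw [FreeMonoid.ofList_cons, map_mul, ih]
    simp only [cntHom, FreeMonoid.lift_eval_of]
    rw [← ofAdd_add]
    congr 1
    rcases c with _ | _ | _ <;> simp [List.count_cons] <;> push_cast <;> ring

/-- `τ` is not Ab-continuous: some language recognized by a finite abelian
group has a preimage under `τ` which is not recognized by any finite abelian
group. -/
theorem tauRw_not_ab_continuous :
    ∃ L : Set (List ABX), RecogByFinAbGroup L ∧
      ¬ RecogByFinAbGroup (tauRw ⁻¹' L) := by
  refine ⟨{w : List ABX | (w.count ABX.x : ZMod 2) = 0}, ?_, ?_⟩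
  · exact ⟨Multiplicative (ZMod 2), inferInstance, inferInstance, cntHom,
      {Multiplicative.ofAdd 0}, by ext w; simp [cntHom_apply]⟩
  · rintro ⟨G, _, _, φ, S, hS⟩
    have hu : [AB.a, AB.b, AB.a] ∉ tauRw ⁻¹' {w : List ABX | (w.count ABX.x : ZMod 2) = 0} := by
      simp [tauRw, tauAux]
    have hv : [AB.b, AB.a, AB.a] ∈ tauRw ⁻¹' {w : List ABX | (w.count ABX.x : ZMod 2) = 0} := by
      simp [tauRw, tauAux]
    rw [hS] at hu hv
    have key : φ (FreeMonoid.ofList [AB.a, AB.b, AB.a]) = φ (FreeMonoid.ofList [AB.b, AB.a, AB.a]) := by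
      simp only [FreeMonoid.ofList_cons, FreeMonoid.ofList_nil, map_mul, map_one, mul_one]
      rw [mul_left_comm]
    exact hu (by rw [Set.mem_setOf_eq, key]; exact hv)
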